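/- arXiv:1608.02807 — 5 statements merged into one kernel-verified Lean document; each statement's English description precedes it below -/
import Mathlib

section
/- In the least model of the clauses defining new6 (encoding parallel synchronization of two activities with residual times A, B and elapsed time C), new6(A,B,C,D) holds if and only if A ≥ 0, B ≥ 0, and D = max(A,B) + C. -/
inductive New10 : ℤ → ℤ → ℤ → Prop
  | base (B : ℤ) : New10 0 B B
  | step (A B C : ℤ) : A > 0 → New10 0 (A + B) C → New10 A B C

/-- Least model of the clauses defining `new6` (parallel synchronization of two
    activities with residual times `A`, `B` and elapsed time `C`). -/
inductive New6 : ℤ → ℤ → ℤ → ℤ → Prop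
  | both_done (C : ℤ) : New6 0 0 C C
  | left_done (B C D : ℤ) : New10 B C D → New6 0 B C D
  | right_done (A C D : ℤ) : New10 A C D → New6 A 0 C D
  | step_left (A B C D : ℤ) : 0 < A → A ≤ B → New6 0 (B - A) (A + C) D → New6 A B C D
  | step_right (A B C D : ℤ) : 0 < B → B ≤ A → New6 (A - B) 0 (B + C) D → New6 A B C D

lemma new10_iff (A B C : ℤ) : New10 A B C ↔ A ≥ 0 ∧ C = A + B := by
  constructor
  · intro h
    induction h with
    | base B => omega
    | step A B C hA h ih => omega
  · rintro ⟨hA, rfl⟩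
    rcases eq_or_lt_of_le hA with h | h
    · rw [← h]; simpa using New10.base B
    · exact New10.step A B (A + B) h (New10.base (A + B))

lemma new6_of (A B C : ℤ) (hA : A ≥ 0) (hB : B ≥ 0) : New6 A B C (max A B + C) := by
  rcases eq_or_lt_of_le hA with h | h
  · subst h
    exact New6.left_done B C _ ((new10_iff B C (max 0 B + C)).2 ⟨hB, by omega⟩)
  rcases eq_or_lt_of_le hB with h' | h'
  · subst h'
    exact New6.right_done A C _ ((new10_iff A C (max A 0 + C)).2 ⟨hA, by omega⟩)
  rcases le_total A B with hle | hle
  · refine New6.step_left A B C _ h hle (New6.left_done _ _ _ ?_)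
    exact (new10_iff _ _ _).2 ⟨by omega, by omega⟩
  · refine New6.step_right A B C _ h' hle (New6.right_done _ _ _ ?_)
    exact (new10_iff _ _ _).2 ⟨by omega, by omega⟩

theorem new6_iff (A B C D : ℤ) :
    New6 A B C D ↔ A ≥ 0 ∧ B ≥ 0 ∧ D = max A B + C := by
  constructor
  · intro h
    induction h with
    | both_done C => omega
    | left_done B C D h => rw [new10_iff] at h; omega
    | right_done A C D h => rw [new10_iff] at h; omega
    | step_left A B C D hA hAB h ih => omega
    | step_right A B C D hB hBA h ih => omega
  · rintro ⟨hA, hB, rfl⟩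
    exact new6_of A B C hA hB
end

section
/- For any cp-equivalence on a set of clauses defining mutually recursive predicates, collapsing equivalent predicates preserves satisfiability: concretely, for an abstract clause system where two predicates p and q have bodies that become identical after the renaming mapping both p and q to q, the system with p's clauses deleted and all occurrences of p replaced by q is satisfiable iff the original system is, and the least models agree with p interpreted as q. -/
/-- Abstract clause systems: over a domain `D` and predicate symbols `σ`, an
    interpretation is `I : σ → Set D`; a clause body is a (monotone) operator
    taking an interpretation to the set of elements it derives.  A system
    assigns to each predicate symbol a set of clause bodies. -/
def IsModel {σ : Type*} {D : Type*} (P : σ → Set ((σ → Set D) → Set D))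
    (I : σ → Set D) : Prop :=
  ∀ s, ∀ b ∈ P s, b I ⊆ I s

def IsLeastModel {σ : Type*} {D : Type*} (P : σ → Set ((σ → Set D) → Set D))
    (M : σ → Set D) : Prop :=
  IsModel P M ∧ ∀ I, IsModel P I → ∀ s, M s ⊆ I s

/-- Collapsing cp-equivalent predicates preserves satisfiability.
    Here `ρ` renames `p` to `q`; a body `b` with `p` replaced by `q` is the
    operator `fun I => b (fun s => I (ρ s))`.  The hypothesis `hequiv` says that
    the bodies of `p`'s clauses and those of `q`'s clauses become identical (as
    sets of renamed operators) after the renaming; `P'` is the system with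
    `p`'s clauses deleted and `p` replaced by `q` everywhere.  Then the least
    model of `P'`, with `p` interpreted as `q`, is the least model of `P`; in
    particular, for a monotone goal `g`, `P` has a model refuting `g` iff `P'`
    has a model refuting the renamed goal. -/
theorem cp_equivalence_collapse {σ : Type*} {D : Type*} [DecidableEq σ]
    (P : σ → Set ((σ → Set D) → Set D)) (p q : σ) (hpq : p ≠ q)
    (ρ : σ → σ) (hρ : ρ = fun s => if s = p then q else s)
    (hmono : ∀ s, ∀ b ∈ P s, Monotone b)
    (hequiv : (fun b : (σ → Set D) → Set D => fun I : σ → Set D =>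
                  b (fun s => I (ρ s))) '' P p =
              (fun b : (σ → Set D) → Set D => fun I : σ → Set D =>
                  b (fun s => I (ρ s))) '' P q)
    (P' : σ → Set ((σ → Set D) → Set D))
    (hP' : P' = fun s => if s = p then ∅ else
        (fun b : (σ → Set D) → Set D => fun I : σ → Set D =>
            b (fun s => I (ρ s))) '' P s)
    (M' : σ → Set D) (hM' : IsLeastModel P' M')
    (g : (σ → Set D) → Prop) (hg : Monotone g) :
    IsLeastModel P (fun s => M' (ρ s)) ∧
    ((∃ I, IsModel P I ∧ ¬ g I) ↔
      (∃ I, IsModel P' I ∧ ¬ g (fun s => I (ρ s)))) := by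
  have hρp : ρ p = q := by simp [hρ]
  have hρs : ∀ s, s ≠ p → ρ s = s := fun s hs => by simp [hρ, hs]
  obtain ⟨hM'mod, hM'least⟩ := hM'
  -- renamed bodies belong to `P'` at the renamed head
  have hmem : ∀ s, ∀ b ∈ P s,
      (fun I : σ → Set D => b (fun t => I (ρ t))) ∈ P' (ρ s) := by
    intro s b hb
    by_cases h : s = p
    · subst h
      rw [hρp, hP']
      simp only [if_neg (Ne.symm hpq)]
      rw [← hequiv]
      exact ⟨b, hb, rfl⟩
    · rw [hρs s h, hP']
      simp only [if_neg h]
      exact ⟨b, hb, rfl⟩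
  -- any model of `P'`, composed with `ρ`, is a model of `P`
  have hmodP : ∀ I' : σ → Set D, IsModel P' I' →
      IsModel P (fun s => I' (ρ s)) := by
    intro I' hI' s b hb
    exact hI' (ρ s) _ (hmem s b hb)
  -- from a model `I` of `P`, build a model of `P'`
  have hJ : ∀ I : σ → Set D, IsModel P I →
      IsModel P' (fun s => if s = q then I p ∩ I q else I s) := by
    intro I hI s b' hb'
    rw [hP'] at hb'
    by_cases h : s = p
    · simp [h] at hb'
    · simp only [if_neg h] at hb'
      obtain ⟨b, hb, rfl⟩ := hb'
      have hle : (fun t => (fun s => if s = q then I p ∩ I q else I s) (ρ t))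
          ≤ I := by
        intro t
        by_cases ht : t = p
        · subst ht
          simp only [hρp, if_pos rfl]
          exact Set.inter_subset_left
        · simp only [hρs t ht]
          by_cases htq : t = q
          · simp only [if_pos htq, htq]; exact Set.inter_subset_right
          · simp only [if_neg htq]; exact le_rfl
      by_cases hsq : s = q
      · simp only [if_pos hsq]
        refine Set.subset_inter ?_
          (((hmono s b hb hle).trans (hI s b hb)).trans (hsq ▸ le_rfl))
        have hmemp : (fun I : σ → Set D => b (fun t => I (ρ t))) ∈
            (fun b : (σ → Set D) → Set D => fun I : σ → Set D =>
              b (fun s => I (ρ s))) '' P p := by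
          rw [hequiv]; exact ⟨b, hsq ▸ hb, rfl⟩
        obtain ⟨b'', hb'', heq⟩ := hmemp
        exact (le_of_eq (congrFun heq.symm
            (fun s => if s = q then I p ∩ I q else I s))).trans
          ((hmono p b'' hb'' hle).trans (hI p b'' hb''))
      · simp only [if_neg hsq]
        exact (hmono s b hb hle).trans (hI s b hb)
  -- leastness
  have hleast : ∀ I, IsModel P I → ∀ s, M' (ρ s) ⊆ I s := by
    intro I hI s
    have h := hM'least _ (hJ I hI)
    by_cases hs : s = p
    · subst hs
      rw [hρp]
      refine (h q).trans ?_
      simp only [if_pos rfl]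
      exact Set.inter_subset_left
    · rw [hρs s hs]
      refine (h s).trans ?_
      by_cases hsq : s = q
      · simp only [if_pos hsq, hsq]; exact Set.inter_subset_right
      · simp only [if_neg hsq]; exact le_rfl
  refine ⟨⟨hmodP M' hM'mod, hleast⟩, ?_, ?_⟩
  · rintro ⟨I, hI, hgI⟩
    exact ⟨M', hM'mod, fun hgM => hgI (hg (fun s => hleast I hI s) hgM)⟩
  · rintro ⟨I, hI, hgI⟩
    exact ⟨fun s => I (ρ s), hmodP I hI, hgI⟩
end

section
/- Characterization of new21: in the least model of its defining clauses, new21(A,B,C) holds if and only if A ≥ 0 and there exists d with 1 ≤ d ≤ 3 and C = A + B + d. -/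
inductive New21 : ℤ → ℤ → ℤ → Prop
  | base (B C : ℤ) : (∃ D : ℤ, 1 ≤ D ∧ D ≤ 3 ∧ New10 D B C) → New21 0 B C
  | step (A B C : ℤ) : A > 0 → New21 0 (A + B) C → New21 A B C

theorem new21_iff (A B C : ℤ) :
    New21 A B C ↔ A ≥ 0 ∧ ∃ d : ℤ, 1 ≤ d ∧ d ≤ 3 ∧ C = A + B + d := by
  constructor
  · intro h
    induction h with
    | base B C h =>
      obtain ⟨D, h1, h2, h3⟩ := h
      rw [new10_iff] at h3
      exact ⟨le_refl 0, D, h1, h2, by omega⟩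
    | step A B C hA _ ih =>
      obtain ⟨_, d, h1, h2, h3⟩ := ih
      exact ⟨le_of_lt hA, d, h1, h2, by omega⟩
  · rintro ⟨hA, d, h1, h2, rfl⟩
    have base : New21 0 (A + B) (A + B + d) :=
      New21.base _ _ ⟨d, h1, h2, (new10_iff d (A + B) (A + B + d)).2 ⟨by omega, by ring⟩⟩
    rcases eq_or_lt_of_le hA with h | h
    · rw [← h] at base ⊢; simpa using base
    · exact New21.step A B _ h base
end

section
/- Characterization of new37: in the least model of its defining clauses, new37(A,B,C) holds if and only if A ≥ 0 and there exists d with 1 ≤ d ≤ 4 and C = A + B + d. -/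
inductive New17 : ℤ → ℤ → ℤ → Prop
  | base (B : ℤ) : New17 0 B B
  | step (A B C : ℤ) : A > 0 → New17 0 (A + B) C → New17 A B C

inductive New11 : ℤ → ℤ → ℤ → Prop
  | base (B : ℤ) : New11 0 B B
  | step (A B C : ℤ) : A > 0 → New11 0 (A + B) C → New11 A B C

inductive New37 : ℤ → ℤ → ℤ → Prop
  | base₁ (B C : ℤ) : (∃ D : ℤ, 1 ≤ D ∧ D ≤ 3 ∧ New17 D B C) → New37 0 B C
  | base₂ (B C : ℤ) : (∃ D : ℤ, 2 ≤ D ∧ D ≤ 4 ∧ New11 D B C) → New37 0 B C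
  | step (A B C : ℤ) : A > 0 → New37 0 (A + B) C → New37 A B C

lemma new17_eq {A B C : ℤ} (h : New17 A B C) : C = A + B := by
  induction h with
  | base B => ring
  | step A B C hA h ih => omega

lemma new11_eq {A B C : ℤ} (h : New11 A B C) : C = A + B := by
  induction h with
  | base B => ring
  | step A B C hA h ih => omega

lemma new17_of (A B : ℤ) (hA : 0 < A) : New17 A B (A + B) :=
  New17.step A B (A + B) hA (New17.base (A + B))

lemma new11_of (A B : ℤ) (hA : 0 < A) : New11 A B (A + B) :=
  New11.step A B (A + B) hA (New11.base (A + B))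

theorem new37_iff (A B C : ℤ) :
    New37 A B C ↔ A ≥ 0 ∧ ∃ d : ℤ, 1 ≤ d ∧ d ≤ 4 ∧ C = A + B + d := by
  constructor
  · intro h
    induction h with
    | base₁ B C h =>
      obtain ⟨D, h1, h2, h17⟩ := h
      have := new17_eq h17
      exact ⟨le_refl 0, D, h1, by omega, by omega⟩
    | base₂ B C h =>
      obtain ⟨D, h1, h2, h11⟩ := h
      have := new11_eq h11
      exact ⟨le_refl 0, D, by omega, h2, by omega⟩
    | step A B C hA h ih =>
      obtain ⟨_, d, h1, h2, h3⟩ := ih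
      exact ⟨by omega, d, h1, h2, by omega⟩
  · rintro ⟨hA, d, h1, h2, h3⟩
    have base : ∀ B' C' : ℤ, C' = B' + d → New37 0 B' C' := by
      intro B' C' hC
      have hC' : C' = d + B' := by omega
      rcases lt_or_ge d 4 with h4 | h4
      · exact New37.base₁ B' C' ⟨d, h1, by omega, hC' ▸ new17_of d B' (by omega)⟩
      · exact New37.base₂ B' C' ⟨d, by omega, by omega, hC' ▸ new11_of d B' (by omega)⟩
    rcases eq_or_lt_of_le hA with h0 | h0
    · exact h0 ▸ base B C (by omega)
    · exact New37.step A B C h0 (base (A + B) C (by omega))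
end

section
/- Characterization of new1 (the cyclic add-item/pay phase of the purchase order process): in the least model, new1(A,B,C) holds if and only if A ≥ 0 and C − (A + B) belongs to the set { d₁+⋯+dₙ + e : n ≥ 0, dᵢ ∈ [1,6], e ∈ [1,2] }; equivalently, iff A ≥ 0 and C − (A + B) ≥ 1. -/
inductive New44 : ℤ → ℤ → ℤ → Prop
  | base (B : ℤ) : New44 0 B B
  | step (A B C : ℤ) : A > 0 → New44 0 (A + B) C → New44 A B C

inductive New1 : ℤ → ℤ → ℤ → Prop
  | loop (B C D : ℤ) : 1 ≤ D → D ≤ 6 → New1 D B C → New1 0 B C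
  | exit (B C : ℤ) : (∃ D : ℤ, 1 ≤ D ∧ D ≤ 2 ∧ New44 D B C) → New1 0 B C
  | step (A B C : ℤ) : A > 0 → New1 0 (A + B) C → New1 A B C

lemma new44_char {A B C : ℤ} (h : New44 A B C) : A ≥ 0 ∧ C = A + B := by
  induction h with
  | base B => exact ⟨le_refl 0, by ring⟩
  | step A B C hA h ih => exact ⟨le_of_lt hA, by linarith [ih.2]⟩

lemma new1_of (k : ℕ) : ∀ B C : ℤ, C - B = (k : ℤ) + 1 → New1 0 B C := by
  induction k with
  | zero =>
    intro B C h
    refine New1.exit B C ⟨1, le_refl 1, by norm_num, ?_⟩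
    have : C = 1 + B := by push_cast at h; linarith
    exact New44.step 1 B C one_pos (this ▸ New44.base (1 + B))
  | succ k ih =>
    intro B C h
    refine New1.loop B C 1 le_rfl (by norm_num) (New1.step 1 B C one_pos ?_)
    apply ih (1 + B) C
    push_cast at h ⊢; linarith

lemma new1_char {A B C : ℤ} (h : New1 A B C) : A ≥ 0 ∧ C - (A + B) ≥ 1 := by
  induction h with
  | loop B C D h1 h6 h ih => exact ⟨le_refl 0, by linarith [ih.1, ih.2]⟩
  | exit B C h =>
    obtain ⟨D, h1, h2, h44⟩ := h
    have := (new44_char h44).2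
    exact ⟨le_refl 0, by linarith⟩
  | step A B C hA h ih => exact ⟨le_of_lt hA, by linarith [ih.2]⟩

lemma new1_of' {A B C : ℤ} (hA : A ≥ 0) (hC : C - (A + B) ≥ 1) : New1 A B C := by
  rcases hA.lt_or_eq with h | h
  · refine New1.step A B C h ?_
    apply new1_of (C - (A + B) - 1).toNat
    rw [Int.toNat_of_nonneg (by linarith)]; ring
  · subst h
    apply new1_of (C - (0 + B) - 1).toNat
    rw [Int.toNat_of_nonneg (by linarith)]; ring

theorem new1_iff (A B C : ℤ) :
    (New1 A B C ↔ A ≥ 0 ∧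
      ∃ (l : List ℤ) (e : ℤ), (∀ d ∈ l, 1 ≤ d ∧ d ≤ 6) ∧ 1 ≤ e ∧ e ≤ 2 ∧
        C - (A + B) = l.sum + e) ∧
    (New1 A B C ↔ A ≥ 0 ∧ C - (A + B) ≥ 1) := by
  constructor
  · constructor
    · intro h
      obtain ⟨hA, hC⟩ := new1_char h
      refine ⟨hA, List.replicate (C - (A + B) - 1).toNat 1, 1, ?_, le_rfl, by norm_num, ?_⟩
      · intro d hd
        simp only [List.mem_replicate] at hd
        omega
      · rw [List.sum_replicate, nsmul_eq_mul, mul_one,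
          Int.toNat_of_nonneg (by linarith)]
        ring
    · rintro ⟨hA, l, e, hl, he1, he2, hsum⟩
      have hs : l.sum ≥ 0 := List.sum_nonneg fun d hd => by linarith [(hl d hd).1]
      exact new1_of' hA (by linarith)
  · exact ⟨fun h => new1_char h, fun ⟨hA, hC⟩ => new1_of' hA hC⟩
end
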